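/- arXiv:2601.09700 — 2 statements merged into one kernel-verified Lean document; each statement's English description precedes it below -/
import Mathlib

section
/- Let n ∈ ℕ and let ρ : ℝⁿ \ {0} → [0,∞) satisfy (H0). Then for every u ∈ C_c^∞(ℝⁿ) and every v ∈ C_c^∞(ℝⁿ; ℝⁿ), the nonlocal integration by parts formula holds: ∫_{ℝⁿ} ∇_ρ u(x) · v(x) dx = − ∫_{ℝⁿ} u(x) div_ρ v(x) dx. -/
open MeasureTheory Metric

noncomputable section

/-- `n`-dimensional Euclidean space. -/
abbrev Euc (n : ℕ) := EuclideanSpace ℝ (Fin n)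

/-- The nonlocal gradient with kernel `ρ`:
`∇_ρ u (x) = ∫ ((u x - u y)/|x-y|) ((x-y)/|x-y|) ρ(x-y) dy`. -/
def nlGrad (n : ℕ) (ρ : Euc n → ℝ) (u : Euc n → ℝ) (x : Euc n) : Euc n :=
  ∫ y : Euc n, (((u x - u y) * ρ (x - y)) / ‖x - y‖ ^ 2) • (x - y)

/-- The nonlocal divergence with kernel `ρ`:
`div_ρ v (x) = ∫ ((v x - v y)/|x-y|) · ((x-y)/|x-y|) ρ(x-y) dy`. -/
def nlDiv (n : ℕ) (ρ : Euc n → ℝ) (v : Euc n → Euc n) (x : Euc n) : ℝ :=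
  ∫ y : Euc n, ((inner ℝ (v x - v y) (x - y) : ℝ) * ρ (x - y)) / ‖x - y‖ ^ 2

/-- Hypothesis (H0) on the kernel `ρ`, with radial representation `ρb` and
radius `ε` for the positivity of the infimum near the origin. -/
def H0 (n : ℕ) (ρ : Euc n → ℝ) (ρb : ℝ → ℝ) (ε : ℝ) : Prop :=
  (∀ x, ρ x = ρb ‖x‖) ∧
  (∀ x : Euc n, x ≠ 0 → 0 ≤ ρ x) ∧
  LocallyIntegrable ρ volume ∧
  Integrable (fun x : Euc n => min 1 ‖x‖⁻¹ * ρ x) volume ∧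
  ∃ c > (0 : ℝ), ∀ x ∈ closedBall (0 : Euc n) ε, x ≠ 0 → c ≤ ρ x


/-! Both sides are absolutely convergent double integrals over `ℝⁿ × ℝⁿ`. A smooth compactly
supported `f` satisfies `‖f x - f y‖ ≤ C min(‖x - y‖, 1)`, so each integrand is dominated by
`g(x) min(1, ‖x - y‖⁻¹) ρ(x - y)` with `g` integrable, which is integrable by (H0). Since `ρ` is
even, the sum `H` of the two integrands satisfies
`H(x, y) + H(y, x) = 2 (φ(x, x - y) - φ(y, x - y))` with `φ(z, w) = u(z) ⟪w, v(z)⟫ ρ(w) / ‖w‖²`.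
After symmetrising and substituting `y = x + w`, the inner integral over `x` vanishes by
translation invariance of Lebesgue measure. -/

open scoped InnerProductSpace NNReal

theorem LipschitzWith.norm_sub_le_mul_min {α F : Type*} [SeminormedAddCommGroup α]
    [SeminormedAddCommGroup F] {f : α → F} {K : ℝ≥0} {M : ℝ} (hf : LipschitzWith K f)
    (hM : ∀ x, ‖f x‖ ≤ M) (x y : α) :
    ‖f x - f y‖ ≤ max (K : ℝ) (2 * M) * min ‖x - y‖ 1 := by
  have hK : ‖f x - f y‖ ≤ K * ‖x - y‖ := by
    simpa only [dist_eq_norm_sub] using hf.dist_le_mul x y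
  have h2M : ‖f x - f y‖ ≤ 2 * M := by
    linarith [_root_.norm_sub_le (f x) (f y), hM x, hM y]
  rcases le_total ‖x - y‖ 1 with h | h
  · rw [min_eq_left h]
    exact hK.trans (mul_le_mul_of_nonneg_right (le_max_left _ _) (norm_nonneg _))
  · rw [min_eq_right h, mul_one]
    exact h2M.trans (le_max_right _ _)

theorem HasCompactSupport.exists_norm_sub_le_mul_min {E F : Type*} [NormedAddCommGroup E]
    [NormedSpace ℝ E] [FiniteDimensional ℝ E] [NormedAddCommGroup F] [NormedSpace ℝ F]
    {f : E → F} {n : WithTop ℕ∞} (hf : HasCompactSupport f) (h'f : ContDiff ℝ n f)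
    (hn : n ≠ 0) : ∃ C, ∀ x y, ‖f x - f y‖ ≤ C * min ‖x - y‖ 1 := by
  obtain ⟨K, hK⟩ := ContDiff.lipschitzWith_of_hasCompactSupport hf h'f hn
  obtain ⟨M, hM⟩ := hf.exists_bound_of_continuous h'f.continuous
  exact ⟨_, hK.norm_sub_le_mul_min hM⟩

-- At `r = 0` both sides vanish, since `x / 0 = 0` and `min 1 0⁻¹ = 0`.
theorem abs_mul_div_sq_le_mul_min_inv {P C r s : ℝ} (hr : 0 ≤ r) (hs : 0 < r → 0 ≤ s)
    (hP : |P| ≤ C * (min r 1 * r)) : |P * s / r ^ 2| ≤ C * (min 1 r⁻¹ * s) := by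
  rcases hr.eq_or_lt with rfl | hr
  · simp
  have hmin : min r 1 / r = min 1 r⁻¹ := by
    rw [← min_div_div_right hr.le, div_self hr.ne', one_div]
  rw [abs_div, abs_mul, abs_of_nonneg (hs hr), abs_of_pos (by positivity : (0 : ℝ) < r ^ 2)]
  calc |P| * s / r ^ 2 ≤ C * (min r 1 * r) * s / r ^ 2 := by gcongr; exact hs hr
    _ = C * (min r 1 / r * s) := by field_simp
    _ = C * (min 1 r⁻¹ * s) := by rw [hmin]

section Group

variable {G E : Type*} [AddCommGroup G] [MeasurableSpace G] [MeasurableAdd₂ G] [MeasurableNeg G]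
  [NormedAddCommGroup E] [NormedSpace ℝ E] {μ : Measure G} [SFinite μ]

theorem integrable_mul_comp_sub [μ.IsAddRightInvariant] [μ.IsNegInvariant] {f g : G → ℝ}
    (hf : Integrable f μ) (hg : Integrable g μ) :
    Integrable (fun p : G × G => f p.1 * g (p.1 - p.2)) (μ.prod μ) := by
  have := (hf.convolution_integrand (ContinuousLinearMap.mul ℝ ℝ) hg.comp_neg).swap
  simpa only [Function.comp_def, Prod.fst_swap, Prod.snd_swap, neg_sub,
    ContinuousLinearMap.mul_apply'] using this

theorem integral_prod_sub_eq_zero [μ.IsAddLeftInvariant] [μ.IsAddRightInvariant]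
    {φ : G → G → E} (hφ : ∀ w, Integrable (φ · w) μ)
    (hQ : Integrable (fun p : G × G => φ p.1 (p.1 - p.2) - φ p.2 (p.1 - p.2)) (μ.prod μ)) :
    ∫ p : G × G, φ p.1 (p.1 - p.2) - φ p.2 (p.1 - p.2) ∂μ.prod μ = 0 := by
  set Q : G × G → E := fun p => φ p.1 (p.1 - p.2) - φ p.2 (p.1 - p.2)
  have hshear : MeasurePreserving (MeasurableEquiv.shearAddRight G) (μ.prod μ) (μ.prod μ) :=
    measurePreserving_prod_add μ μ
  have hQshear : Integrable (fun p => Q (MeasurableEquiv.shearAddRight G p)) (μ.prod μ) :=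
    hshear.integrable_comp_emb (MeasurableEquiv.measurableEmbedding _) |>.2 hQ
  rw [← hshear.integral_comp', integral_prod_symm _ hQshear]
  refine integral_eq_zero_of_ae (.of_forall fun w => ?_)
  change ∫ x, φ x (x - (x + w)) - φ (x + w) (x - (x + w)) ∂μ = 0
  simp_rw [sub_add_cancel_left]
  rw [integral_sub (hφ _) ((hφ _).comp_add_right w),
    integral_add_right_eq_self (φ · (-w)), sub_self]

theorem integral_prod_eq_zero_of_add_swap [μ.IsAddLeftInvariant] [μ.IsAddRightInvariant]
    {H : G × G → E} {φ : G → G → E} (hH : Integrable H (μ.prod μ))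
    (hφ : ∀ w, Integrable (φ · w) μ)
    (hswap : ∀ x y, H (x, y) + H (y, x) = (2 : ℝ) • (φ x (x - y) - φ y (x - y))) :
    ∫ p, H p ∂μ.prod μ = 0 := by
  have hQ_eq : (fun p : G × G => φ p.1 (p.1 - p.2) - φ p.2 (p.1 - p.2)) =
      fun p => (2 : ℝ)⁻¹ • (H p + H p.swap) := by
    funext ⟨x, y⟩
    rw [Prod.swap_prod_mk, hswap, smul_smul, inv_mul_cancel₀ two_ne_zero, one_smul]
  have hHswap : Integrable (fun p => H p.swap) (μ.prod μ) := hH.swap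
  have hQ := integral_prod_sub_eq_zero hφ (hQ_eq ▸ (hH.add hHswap).smul _)
  rwa [hQ_eq, integral_smul, integral_add hH hHswap, integral_prod_swap, ← two_smul ℝ,
    smul_smul, inv_mul_cancel₀ two_ne_zero, one_smul] at hQ

end Group

section Kernel

variable {E : Type*} [NormedAddCommGroup E] [NormedSpace ℝ E] [FiniteDimensional ℝ E]
  [MeasurableSpace E] [BorelSpace E] {μ : Measure E} [μ.IsAddHaarMeasure] {ρ : E → ℝ}

theorem integrable_mul_comp_sub_div_norm_sq (hρ0 : ∀ z, z ≠ 0 → 0 ≤ ρ z)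
    (hρm : AEStronglyMeasurable ρ μ)
    (hm : Integrable (fun z => min 1 ‖z‖⁻¹ * ρ z) μ) {P : E × E → ℝ} {f : E → ℝ}
    (hP : Continuous P) (hf : Integrable f μ)
    (hPf : ∀ x y, |P (x, y)| ≤ f x * (min ‖x - y‖ 1 * ‖x - y‖)) :
    Integrable (fun p : E × E => P p * ρ (p.1 - p.2) / ‖p.1 - p.2‖ ^ 2) (μ.prod μ) := by
  refine (integrable_mul_comp_sub hf hm).mono' ?_ (.of_forall fun p => ?_)
  · have hρsub := hρm.comp_quasiMeasurePreserving (quasiMeasurePreserving_sub μ μ)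
    exact ((hP.aemeasurable.mul hρsub.aemeasurable).div
      (by fun_prop : Continuous fun p : E × E => ‖p.1 - p.2‖ ^ 2).aemeasurable).aestronglyMeasurable
  · rw [Real.norm_eq_abs]
    exact abs_mul_div_sq_le_mul_min_inv (norm_nonneg _) (fun h => hρ0 _ (norm_pos_iff.1 h))
      (hPf p.1 p.2)

theorem integrable_nlGrad_integrand (hρ0 : ∀ z, z ≠ 0 → 0 ≤ ρ z)
    (hρm : AEStronglyMeasurable ρ μ) (hm : Integrable (fun z => min 1 ‖z‖⁻¹ * ρ z) μ)
    {u : E → ℝ} {C : ℝ} (hu : ∀ x y, ‖u x - u y‖ ≤ C * min ‖x - y‖ 1) (hu_cont : Continuous u)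
    (x : E) : Integrable (fun y => ((u x - u y) * ρ (x - y) / ‖x - y‖ ^ 2) • (x - y)) μ := by
  refine ((hm.comp_sub_left x).const_mul C).mono' ?_ (.of_forall fun y => ?_)
  · have hρsub := hρm.comp_quasiMeasurePreserving (quasiMeasurePreserving_sub_left μ x)
    exact ((((by fun_prop : Continuous fun y => u x - u y).aemeasurable.mul
      hρsub.aemeasurable).div (by fun_prop : Continuous fun y => ‖x - y‖ ^ 2).aemeasurable).smul
      (by fun_prop : Continuous fun y => x - y).aemeasurable).aestronglyMeasurable
  · have hP : |(u x - u y) * ‖x - y‖| ≤ C * (min ‖x - y‖ 1 * ‖x - y‖) := by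
      rw [abs_mul, abs_norm, ← Real.norm_eq_abs, ← mul_assoc]
      exact mul_le_mul_of_nonneg_right (hu x y) (norm_nonneg _)
    convert abs_mul_div_sq_le_mul_min_inv (norm_nonneg _) (fun h => hρ0 _ (norm_pos_iff.1 h)) hP
      using 1
    rw [norm_smul, Real.norm_eq_abs, abs_div, abs_div, abs_mul, abs_mul, abs_mul, abs_norm]
    ring

end Kernel

section Pairing

variable {E : Type*} [NormedAddCommGroup E] [InnerProductSpace ℝ E]

def gradPairing (ρ u : E → ℝ) (v : E → E) (x y : E) : ℝ :=
  (u x - u y) * ⟪x - y, v x⟫_ℝ * ρ (x - y) / ‖x - y‖ ^ 2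

def divPairing (ρ u : E → ℝ) (v : E → E) (x y : E) : ℝ :=
  u x * ⟪v x - v y, x - y⟫_ℝ * ρ (x - y) / ‖x - y‖ ^ 2

theorem gradPairing_add_divPairing_add_swap {ρ : E → ℝ} (hρ : ∀ z, ρ (-z) = ρ z)
    (u : E → ℝ) (v : E → E) (x y : E) :
    gradPairing ρ u v x y + divPairing ρ u v x y +
        (gradPairing ρ u v y x + divPairing ρ u v y x) =
      (2 : ℝ) • (u x * ⟪x - y, v x⟫_ℝ * ρ (x - y) / ‖x - y‖ ^ 2 -
        u y * ⟪x - y, v y⟫_ℝ * ρ (x - y) / ‖x - y‖ ^ 2) := by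
  have hyx : y - x = -(x - y) := (neg_sub x y).symm
  simp only [gradPairing, divPairing, hyx, hρ, norm_neg, inner_neg_left, inner_neg_right,
    inner_sub_left, inner_sub_right, real_inner_comm (x - y), smul_eq_mul]
  ring

variable [FiniteDimensional ℝ E] [MeasurableSpace E] [BorelSpace E] {μ : Measure E}
  [μ.IsAddHaarMeasure] {ρ : E → ℝ}

theorem integrable_gradPairing (hρ0 : ∀ z, z ≠ 0 → 0 ≤ ρ z) (hρm : AEStronglyMeasurable ρ μ)
    (hm : Integrable (fun z => min 1 ‖z‖⁻¹ * ρ z) μ) {u : E → ℝ} {v : E → E} {C : ℝ}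
    (hu : ∀ x y, ‖u x - u y‖ ≤ C * min ‖x - y‖ 1) (hu_cont : Continuous u)
    (hv_cont : Continuous v) (hv : Integrable v μ) :
    Integrable (fun p : E × E => gradPairing ρ u v p.1 p.2) (μ.prod μ) := by
  refine integrable_mul_comp_sub_div_norm_sq hρ0 hρm hm (by fun_prop) (hv.norm.const_mul C)
    fun x y => ?_
  rw [abs_mul, ← Real.norm_eq_abs]
  calc ‖u x - u y‖ * |⟪x - y, v x⟫_ℝ| ≤ (C * min ‖x - y‖ 1) * (‖x - y‖ * ‖v x‖) :=
        mul_le_mul (hu x y) (abs_real_inner_le_norm _ _) (abs_nonneg _)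
          ((norm_nonneg _).trans (hu x y))
    _ = C * ‖v x‖ * (min ‖x - y‖ 1 * ‖x - y‖) := by ring

theorem integrable_divPairing (hρ0 : ∀ z, z ≠ 0 → 0 ≤ ρ z) (hρm : AEStronglyMeasurable ρ μ)
    (hm : Integrable (fun z => min 1 ‖z‖⁻¹ * ρ z) μ) {u : E → ℝ} {v : E → E} {C : ℝ}
    (hv : ∀ x y, ‖v x - v y‖ ≤ C * min ‖x - y‖ 1) (hv_cont : Continuous v)
    (hu_cont : Continuous u) (hu : Integrable u μ) :
    Integrable (fun p : E × E => divPairing ρ u v p.1 p.2) (μ.prod μ) := by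
  refine integrable_mul_comp_sub_div_norm_sq hρ0 hρm hm (by fun_prop) (hu.abs.const_mul C)
    fun x y => ?_
  rw [abs_mul]
  calc |u x| * |⟪v x - v y, x - y⟫_ℝ| ≤ |u x| * ((C * min ‖x - y‖ 1) * ‖x - y‖) :=
        mul_le_mul_of_nonneg_left ((abs_real_inner_le_norm _ _).trans
          (mul_le_mul_of_nonneg_right (hv x y) (norm_nonneg _))) (abs_nonneg _)
    _ = C * |u x| * (min ‖x - y‖ 1 * ‖x - y‖) := by ring

end Pairing

theorem integral_inner_nlGrad_eq {n : ℕ} {ρ : Euc n → ℝ} (hρ0 : ∀ z, z ≠ 0 → 0 ≤ ρ z)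
    (hρm : AEStronglyMeasurable ρ volume) (hm : Integrable (fun z => min 1 ‖z‖⁻¹ * ρ z) volume)
    {u : Euc n → ℝ} {C : ℝ} (hu : ∀ x y, ‖u x - u y‖ ≤ C * min ‖x - y‖ 1)
    (hu_cont : Continuous u) (v : Euc n → Euc n) :
    ∫ x, ⟪nlGrad n ρ u x, v x⟫_ℝ = ∫ x, ∫ y, gradPairing ρ u v x y := by
  congr 1 with x
  rw [nlGrad, real_inner_comm,
    ← integral_inner (integrable_nlGrad_integrand hρ0 hρm hm hu hu_cont x)]
  congr 1 with y
  rw [real_inner_smul_right, gradPairing, real_inner_comm]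
  ring

theorem integral_mul_nlDiv_eq {n : ℕ} (ρ u : Euc n → ℝ) (v : Euc n → Euc n) :
    ∫ x, u x * nlDiv n ρ v x = ∫ x, ∫ y, divPairing ρ u v x y := by
  congr 1 with x
  rw [nlDiv, ← integral_const_mul]
  congr 1 with y
  rw [divPairing]
  ring

theorem nonlocal_integration_by_parts_general
    (n : ℕ) (ρ : Euc n → ℝ) (ρb : ℝ → ℝ) (ε : ℝ)
    (hρ : H0 n ρ ρb ε)
    (u : Euc n → ℝ) (hu : ContDiff ℝ (⊤ : ℕ∞) u) (hus : HasCompactSupport u)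
    (v : Euc n → Euc n) (hv : ContDiff ℝ (⊤ : ℕ∞) v) (hvs : HasCompactSupport v) :
    ∫ x : Euc n, (inner ℝ (nlGrad n ρ u x) (v x) : ℝ) =
      - ∫ x : Euc n, u x * nlDiv n ρ v x := by
  obtain ⟨hrad, hρ0, hloc, hm, -⟩ := hρ
  have hρm := hloc.aestronglyMeasurable
  obtain ⟨Cu, hCu⟩ := hus.exists_norm_sub_le_mul_min hu (by simp)
  obtain ⟨Cv, hCv⟩ := hvs.exists_norm_sub_le_mul_min hv (by simp)
  have hF := integrable_gradPairing hρ0 hρm hm hCu hu.continuous hv.continuous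
    (hv.continuous.integrable_of_hasCompactSupport hvs)
  have hG := integrable_divPairing hρ0 hρm hm hCv hv.continuous hu.continuous
    (hu.continuous.integrable_of_hasCompactSupport hus)
  rw [integral_inner_nlGrad_eq hρ0 hρm hm hCu hu.continuous, integral_mul_nlDiv_eq,
    integral_integral hF, integral_integral hG, eq_neg_iff_add_eq_zero, ← integral_add hF hG]
  have hsymm : ∀ z, ρ (-z) = ρ z := fun z => by rw [hrad, hrad, norm_neg]
  refine integral_prod_eq_zero_of_add_swap (φ := fun z w => u z * ⟪w, v z⟫_ℝ * ρ w / ‖w‖ ^ 2)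
    (hF.add hG) (fun w => ?_)
    (gradPairing_add_divPairing_add_swap hsymm u v)
  have hψ : Continuous fun z => u z * ⟪w, v z⟫_ℝ := by fun_prop
  exact ((hψ.integrable_of_hasCompactSupport hus.mul_right).mul_const _).div_const _

/-- Nonlocal integration by parts: for `u ∈ C_c^∞(ℝⁿ)` and `v ∈ C_c^∞(ℝⁿ;ℝⁿ)`,
`∫ ∇_ρ u · v = - ∫ u div_ρ v`. -/
theorem nonlocal_integration_by_parts
    (n : ℕ) (ρ : Euc n → ℝ) (ρb : ℝ → ℝ) (ε : ℝ) (hε : 0 < ε)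
    (hρ : H0 n ρ ρb ε)
    (u : Euc n → ℝ) (hu : ContDiff ℝ (⊤ : ℕ∞) u) (hus : HasCompactSupport u)
    (v : Euc n → Euc n) (hv : ContDiff ℝ (⊤ : ℕ∞) v) (hvs : HasCompactSupport v) :
    ∫ x : Euc n, (inner ℝ (nlGrad n ρ u x) (v x) : ℝ) =
      - ∫ x : Euc n, u x * nlDiv n ρ v x :=
  nonlocal_integration_by_parts_general n ρ ρb ε hρ u hu hus v hv hvs
end
end

section
/- Let n ∈ ℕ and let ρ : ℝⁿ \ {0} → [0,∞) satisfy (H0). Then for every u ∈ C_c^∞(ℝⁿ): (i) for each x ∈ ℝⁿ the integrand defining ∇_ρ u(x) is absolutely integrable over ℝⁿ; (ii) ∇_ρ u ∈ L¹(ℝⁿ; ℝⁿ) ∩ L^∞(ℝⁿ; ℝⁿ); consequently ∇_ρ u ∈ L^p(ℝⁿ; ℝⁿ) for every 1 < p < ∞. -/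
/-!
Put `g z = min 1 ‖z‖⁻¹ * |ρ z|`, integrable by (H0). The integrand at `(x, y)` has norm
`|u x - u y| |ρ (x - y)| / ‖x - y‖`, so it is at most `a y * g (x - y)` whenever
`|u x - u y| ≤ a y * min ‖x - y‖ 1`. As `u` is Lipschitz and bounded, this holds with a
constant `a = C`, which gives the integrability of the integrand and `‖∇_ρ u‖ ≤ C ‖g‖₁`.
Off the closed 1-neighbourhood `T` of `tsupport u` we have `u x = 0` and `‖x - y‖ ≥ 1` for
`y ∈ tsupport u`, so it also holds with `a = M 𝟙_{tsupport u}`. Hence `‖∇_ρ u‖` is dominated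
by the integrable function `max (C ‖g‖₁ 𝟙_T) (M 𝟙_{tsupport u} ⋆ g)`, and `L¹ ∩ L^∞ ⊆ L^p`.
-/

open MeasureTheory Metric

noncomputable section

open Set
open scoped Convolution

lemma MeasureTheory.Integrable.memLp_of_ae_bound {α E : Type*} [MeasurableSpace α]
    {μ : Measure α} [NormedAddCommGroup E] {f : α → E} (hf : Integrable f μ) {K : ℝ}
    (hK : ∀ᵐ x ∂μ, ‖f x‖ ≤ K) {p : ENNReal} (hp : 1 ≤ p) : MemLp f p μ := by
  rcases eq_or_ne p ⊤ with rfl | hp_top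
  · exact memLp_top_of_bound hf.1 K hK
  have hp_one : 1 ≤ p.toReal := by
    simpa using ENNReal.toReal_mono hp_top hp
  refine (integrable_norm_rpow_iff hf.1 (by positivity) hp_top).1 ?_
  refine (hf.norm.const_mul (K ^ (p.toReal - 1))).mono'
    (hf.1.norm.aemeasurable.pow_const _).aestronglyMeasurable ?_
  filter_upwards [hK] with x hx
  calc ‖‖f x‖ ^ p.toReal‖ = ‖f x‖ ^ ((p.toReal - 1) + 1) := by
        rw [Real.norm_of_nonneg (by positivity), sub_add_cancel]
    _ = ‖f x‖ ^ (p.toReal - 1) * ‖f x‖ := by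
        rw [Real.rpow_add' (norm_nonneg _) (by linarith), Real.rpow_one]
    _ ≤ K ^ (p.toReal - 1) * ‖f x‖ := by gcongr

section

variable {E : Type*} [NormedAddCommGroup E]

def cutoffKernel (ρ : E → ℝ) (z : E) : ℝ :=
  min 1 ‖z‖⁻¹ * |ρ z|

lemma cutoffKernel_eq_norm (ρ : E → ℝ) (z : E) : cutoffKernel ρ z = ‖min 1 ‖z‖⁻¹ * ρ z‖ := by
  rw [cutoffKernel, norm_mul, Real.norm_eq_abs, Real.norm_eq_abs,
    abs_of_nonneg (le_min zero_le_one (inv_nonneg.2 (norm_nonneg z)))]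

lemma abs_sub_le_indicator_mul_min_of_notMem_cthickening {u : E → ℝ} {M : ℝ}
    (hM : ∀ y, ‖u y‖ ≤ M) {x : E} (hx : x ∉ cthickening 1 (tsupport u)) (y : E) :
    |u x - u y| ≤ (tsupport u).indicator (fun _ => M) y * min ‖x - y‖ 1 := by
  have hux : u x = 0 :=
    image_eq_zero_of_notMem_tsupport fun h => hx (self_subset_cthickening _ h)
  by_cases hy : y ∈ tsupport u
  · have hxy : 1 ≤ ‖x - y‖ := by
      by_contra! h
      exact hx (mem_cthickening_of_dist_le x y 1 _ hy (dist_eq_norm x y ▸ h.le))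
    rw [indicator_of_mem hy, min_eq_right hxy, mul_one, hux, zero_sub, abs_neg]
    exact hM y
  · simp [hux, image_eq_zero_of_notMem_tsupport hy, indicator_of_notMem hy]

variable [NormedSpace ℝ E]

lemma HasCompactSupport.exists_abs_sub_le_mul_min {u : E → ℝ} (hus : HasCompactSupport u)
    (hu : ContDiff ℝ 1 u) : ∃ C, ∀ x y, |u x - u y| ≤ C * min ‖x - y‖ 1 := by
  obtain ⟨L, hL⟩ := hu.lipschitzWith_of_hasCompactSupport hus one_ne_zero
  obtain ⟨M, hM⟩ := hus.exists_bound_of_continuous hu.continuous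
  refine ⟨max (L : ℝ) (2 * M), fun x y => ?_⟩
  rw [mul_min_of_nonneg _ _ (le_max_of_le_left L.coe_nonneg), mul_one]
  refine le_min ?_ ?_
  · calc |u x - u y| ≤ L * ‖x - y‖ := by
          simpa only [Real.dist_eq, dist_eq_norm x y] using hL.dist_le_mul x y
      _ ≤ max (L : ℝ) (2 * M) * ‖x - y‖ := by gcongr; exact le_max_left _ _
  · calc |u x - u y| ≤ ‖u x‖ + ‖u y‖ := abs_sub _ _
      _ ≤ max (L : ℝ) (2 * M) := le_max_of_le_right (by linarith [hM x, hM y])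

def nlGradIntegrand (ρ u : E → ℝ) (x y : E) : E :=
  (((u x - u y) * ρ (x - y)) / ‖x - y‖ ^ 2) • (x - y)

lemma norm_div_norm_sq_smul (c : ℝ) (z : E) : ‖(c / ‖z‖ ^ 2) • z‖ = |c| / ‖z‖ := by
  rcases eq_or_ne z 0 with rfl | hz
  · simp
  have hz' : ‖z‖ ≠ 0 := norm_ne_zero_iff.2 hz
  rw [norm_smul, Real.norm_eq_abs, abs_div, abs_of_nonneg (pow_nonneg (norm_nonneg z) 2)]
  field_simp

lemma norm_nlGradIntegrand_le {ρ u : E → ℝ} {x y : E} {a : ℝ}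
    (h : |u x - u y| ≤ a * min ‖x - y‖ 1) :
    ‖nlGradIntegrand ρ u x y‖ ≤ a * cutoffKernel ρ (x - y) := by
  rcases eq_or_ne (x - y) 0 with hxy | hxy
  · simp [nlGradIntegrand, cutoffKernel, hxy]
  have hpos : 0 < ‖x - y‖ := norm_pos_iff.2 hxy
  have hmin : min ‖x - y‖ 1 / ‖x - y‖ = min 1 ‖x - y‖⁻¹ := by
    rw [← min_div_div_right hpos.le, div_self hpos.ne', one_div]
  rw [nlGradIntegrand, norm_div_norm_sq_smul, abs_mul, cutoffKernel, ← hmin]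
  calc |u x - u y| * |ρ (x - y)| / ‖x - y‖
      ≤ a * min ‖x - y‖ 1 * |ρ (x - y)| / ‖x - y‖ := by gcongr
    _ = a * (min ‖x - y‖ 1 / ‖x - y‖ * |ρ (x - y)|) := by ring

variable [MeasurableSpace E] {μ : Measure E} {ρ u : E → ℝ}

lemma norm_integral_nlGradIntegrand_le {x : E} {a : E → ℝ}
    (ha : Integrable (fun y => a y * cutoffKernel ρ (x - y)) μ)
    (h : ∀ y, |u x - u y| ≤ a y * min ‖x - y‖ 1) :
    ‖∫ y, nlGradIntegrand ρ u x y ∂μ‖ ≤ ∫ y, a y * cutoffKernel ρ (x - y) ∂μ :=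
  norm_integral_le_of_norm_le ha (.of_forall fun y => norm_nlGradIntegrand_le (h y))

variable [FiniteDimensional ℝ E]

lemma MeasureTheory.AEStronglyMeasurable.nlGradIntegrand_comp {α : Type*} [TopologicalSpace α]
    [MeasurableSpace α] [OpensMeasurableSpace α] {ν : Measure α} (hρ : AEStronglyMeasurable ρ μ)
    (hu : Continuous u) {φ : α → E × E} (hφ : Continuous φ)
    (hsub : Measure.QuasiMeasurePreserving (fun a => (φ a).1 - (φ a).2) ν μ) :
    AEStronglyMeasurable (fun a => nlGradIntegrand ρ u (φ a).1 (φ a).2) ν := by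
  have hu₁ : Continuous fun a => u (φ a).1 := hu.comp (continuous_fst.comp hφ)
  have hu₂ : Continuous fun a => u (φ a).2 := hu.comp (continuous_snd.comp hφ)
  have hρφ := (hρ.comp_quasiMeasurePreserving hsub).aemeasurable
  have hsubφ : Continuous fun a => (φ a).1 - (φ a).2 := by fun_prop
  exact (((hu₁.sub hu₂).aemeasurable.mul hρφ).div
    (hsubφ.norm.pow 2).aemeasurable).aestronglyMeasurable.smul hsubφ.aestronglyMeasurable

variable [BorelSpace E] [μ.IsAddHaarMeasure]

lemma integrable_nlGradIntegrand (hρ : AEStronglyMeasurable ρ μ)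
    (hg : Integrable (cutoffKernel ρ) μ) (hu : Continuous u) {x : E} {C : ℝ}
    (hC : ∀ y, |u x - u y| ≤ C * min ‖x - y‖ 1) : Integrable (nlGradIntegrand ρ u x) μ :=
  ((hg.comp_sub_left x).const_mul C).mono'
    (hρ.nlGradIntegrand_comp hu (φ := fun y => (x, y)) (by fun_prop)
      (quasiMeasurePreserving_sub_left μ x))
    (.of_forall fun y => norm_nlGradIntegrand_le (hC y))

lemma norm_integral_nlGradIntegrand_le_mul (hg : Integrable (cutoffKernel ρ) μ) {C : ℝ}
    (hC : ∀ x y, |u x - u y| ≤ C * min ‖x - y‖ 1) (x : E) :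
    ‖∫ y, nlGradIntegrand ρ u x y ∂μ‖ ≤ C * ∫ z, cutoffKernel ρ z ∂μ :=
  calc ‖∫ y, nlGradIntegrand ρ u x y ∂μ‖ ≤ ∫ y, C * cutoffKernel ρ (x - y) ∂μ :=
        norm_integral_nlGradIntegrand_le ((hg.comp_sub_left x).const_mul C) (hC x)
    _ = C * ∫ z, cutoffKernel ρ z ∂μ := by
        rw [integral_const_mul, integral_sub_left_eq_self (cutoffKernel ρ) μ x]

lemma integrable_integral_nlGradIntegrand (hρ : AEStronglyMeasurable ρ μ)
    (hg : Integrable (cutoffKernel ρ) μ) (hu : ContDiff ℝ 1 u) (hus : HasCompactSupport u) :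
    Integrable (fun x => ∫ y, nlGradIntegrand ρ u x y ∂μ) μ := by
  obtain ⟨C, hC⟩ := hus.exists_abs_sub_le_mul_min hu
  obtain ⟨M, hM⟩ := hus.exists_bound_of_continuous hu.continuous
  set T := cthickening 1 (tsupport u)
  set a := (tsupport u).indicator fun _ => M
  have ha : Integrable a μ :=
    (integrableOn_const hus.measure_lt_top.ne).integrable_indicator
      (isClosed_tsupport u).measurableSet
  have hT : Integrable (T.indicator fun _ => C * ∫ z, cutoffKernel ρ z ∂μ) μ :=
    (integrableOn_const hus.isCompact.cthickening.measure_lt_top.ne).integrable_indicator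
      isClosed_cthickening.measurableSet
  refine (hT.sup (ha.integrable_convolution (ContinuousLinearMap.mul ℝ ℝ) hg)).mono'
    (hρ.nlGradIntegrand_comp hu.continuous (φ := id) continuous_id
      (quasiMeasurePreserving_sub μ μ)).integral_prod_right'
    (.of_forall fun x => ?_)
  by_cases hx : x ∈ T
  · refine le_max_of_le_left ?_
    rw [indicator_of_mem hx]
    exact norm_integral_nlGradIntegrand_le_mul hg hC x
  · refine le_max_of_le_right ?_
    -- the bound is `∫ y, a y * cutoffKernel ρ (x - y) ∂μ`, which is `(a ⋆ cutoffKernel ρ) x`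
    refine (norm_integral_nlGradIntegrand_le ?_
      (abs_sub_le_indicator_mul_min_of_notMem_cthickening hM hx)).trans_eq rfl
    exact (hg.comp_sub_left x).bdd_mul ha.1 (.of_forall fun y => norm_indicator_le_norm_self _ y)

end

theorem nlGrad_integrable_and_memLp_general
    (n : ℕ) (ρ : Euc n → ℝ) (ρb : ℝ → ℝ) (ε : ℝ)
    (hρ : H0 n ρ ρb ε)
    (u : Euc n → ℝ) (hu : ContDiff ℝ (⊤ : ℕ∞) u) (hus : HasCompactSupport u) :
    (∀ x : Euc n,
      Integrable (fun y : Euc n => (((u x - u y) * ρ (x - y)) / ‖x - y‖ ^ 2) • (x - y))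
        volume) ∧
    MemLp (nlGrad n ρ u) 1 volume ∧
    MemLp (nlGrad n ρ u) ⊤ volume ∧
    ∀ p : ℝ, 1 < p → MemLp (nlGrad n ρ u) (ENNReal.ofReal p) volume := by
  obtain ⟨-, -, hloc, hint, -⟩ := hρ
  have hρm : AEStronglyMeasurable ρ volume := hloc.aestronglyMeasurable
  have hg : Integrable (cutoffKernel ρ) volume := funext (cutoffKernel_eq_norm ρ) ▸ hint.norm
  have hu₁ : ContDiff ℝ 1 u := hu.of_le (by simp)
  obtain ⟨C, hC⟩ := hus.exists_abs_sub_le_mul_min hu₁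
  have hL1 : Integrable (nlGrad n ρ u) volume :=
    integrable_integral_nlGradIntegrand hρm hg hu₁ hus
  have hLinf : ∀ᵐ x, ‖nlGrad n ρ u x‖ ≤ C * ∫ z, cutoffKernel ρ z :=
    .of_forall (norm_integral_nlGradIntegrand_le_mul hg hC)
  exact ⟨fun x => integrable_nlGradIntegrand hρm hg hu₁.continuous (hC x),
    memLp_one_iff_integrable.2 hL1, hL1.memLp_of_ae_bound hLinf le_top,
    fun p hp => hL1.memLp_of_ae_bound hLinf (ENNReal.one_le_ofReal.2 hp.le)⟩

/-- For `u ∈ C_c^∞(ℝⁿ)`: the integrand defining `∇_ρ u (x)` is absolutely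
integrable for each `x`; `∇_ρ u ∈ L¹ ∩ L^∞`, and consequently `∇_ρ u ∈ L^p`
for every `1 < p < ∞`. -/
theorem nlGrad_integrable_and_memLp
    (n : ℕ) (ρ : Euc n → ℝ) (ρb : ℝ → ℝ) (ε : ℝ) (hε : 0 < ε)
    (hρ : H0 n ρ ρb ε)
    (u : Euc n → ℝ) (hu : ContDiff ℝ (⊤ : ℕ∞) u) (hus : HasCompactSupport u) :
    (∀ x : Euc n,
      Integrable (fun y : Euc n => (((u x - u y) * ρ (x - y)) / ‖x - y‖ ^ 2) • (x - y))
        volume) ∧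
    MemLp (nlGrad n ρ u) 1 volume ∧
    MemLp (nlGrad n ρ u) ⊤ volume ∧
    ∀ p : ℝ, 1 < p → MemLp (nlGrad n ρ u) (ENNReal.ofReal p) volume :=
  nlGrad_integrable_and_memLp_general n ρ ρb ε hρ u hu hus
end
end
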